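/- arXiv:1612.06577 — 3 statements merged into one kernel-verified Lean document; each statement's English description precedes it below -/
import Mathlib

section
/- Let p be an odd prime, k a field of characteristic zero, and ζ_p a primitive p-th root of unity in an algebraic closure of k. Then [k(ζ_p) : k] ≤ 2 if and only if k contains the unique subfield F of ℚ(ζ_p) with [ℚ(ζ_p) : F] = 2. -/
/-!
Write `α = ζ + ζ⁻¹`. For every field `L`, `α ∈ L` iff `[L(ζ) : L] ≤ 2`:
if `α ∈ L` then `ζ` is a root of `X² - αX + 1`; conversely, if the minimal polynomial
`X² + bX + c` of `ζ` over `L` has `c ≠ 1`, then `c`, the product of two `p`-th roots of unity,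
is a primitive `p`-th root of unity and `ζ ∈ L`, while `c = 1` gives `α = -b`.
Since `ℚ(α) ⊆ ℝ` does not contain `ζ`, `[ℚ(ζ) : ℚ(α)] = 2`, and any `F ⊆ ℚ(ζ)` of index two
contains `α`, hence equals `ℚ(α)`. So `ℚ(α)` is the field `F` of the statement.
-/

open IntermediateField Polynomial

section

variable {K E : Type*} [Field K] [Field E] [Algebra K E]

theorem Polynomial.Monic.aeval_of_natDegree_eq_two {f : K[X]} (hf : f.Monic)
    (h2 : f.natDegree = 2) (y : E) :
    aeval y f = y ^ 2 + algebraMap K E (f.coeff 1) * y + algebraMap K E (f.coeff 0) := by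
  rw [aeval_eq_sum_range, h2, Finset.sum_range_succ, Finset.sum_range_succ,
    Finset.sum_range_one, ← h2, hf.coeff_natDegree, h2]
  simp only [pow_one, pow_zero, Algebra.smul_def, map_one, mul_one]
  ring

theorem IntermediateField.eq_of_le_of_relfinrank_eq {A B C : IntermediateField K E}
    (hAB : A ≤ B) (hBC : B ≤ C) (h : relfinrank A C = relfinrank B C)
    (h0 : relfinrank B C ≠ 0) : A = B := by
  have hmul := relfinrank_mul_relfinrank hAB hBC
  rw [h, Nat.mul_eq_right h0, relfinrank_eq_one_iff] at hmul
  exact le_antisymm hAB hmul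

theorem IntermediateField.adjoin_simple_add_inv_le (x : E) :
    adjoin K {x + x⁻¹} ≤ adjoin K {x} :=
  adjoin_simple_le_iff.2 <|
    add_mem (mem_adjoin_simple_self K x) (inv_mem (mem_adjoin_simple_self K x))

theorem IntermediateField.relfinrank_sup_adjoin_simple (L : IntermediateField K E) {x : E}
    (hx : IsIntegral L x) : relfinrank L (L ⊔ adjoin K {x}) = (minpoly L x).natDegree := by
  have hle : L ≤ L ⊔ adjoin K {x} := le_sup_left
  have hext : extendScalars hle = adjoin L {x} :=
    restrictScalars_injective K (restrictScalars_adjoin_eq_sup K L {x}).symm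
  rw [relfinrank_eq_finrank_of_le hle, hext, adjoin.finrank hx]

/-- The other root of the minimal polynomial is `c / x`, where `c` is its constant
coefficient; as a divisor of `X ^ n - 1` it is again an `n`-th root of unity. -/
theorem coeff_zero_minpoly_pow_eq_one {x : E} {n : ℕ} (hn : n ≠ 0) (hx : x ^ n = 1)
    (h2 : (minpoly K x).natDegree = 2) : (minpoly K x).coeff 0 ^ n = 1 := by
  have hx0 : x ≠ 0 := by rintro rfl; simp [zero_pow hn] at hx
  have hmonic := minpoly.monic <|
    IsIntegral.of_pow (Nat.pos_of_ne_zero hn) (hx ▸ isIntegral_one (R := K))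
  set c := algebraMap K E ((minpoly K x).coeff 0)
  have hroot : aeval x (minpoly K x) = 0 := minpoly.aeval K x
  have hroot' : aeval (c / x) (minpoly K x) = 0 := by
    rw [hmonic.aeval_of_natDegree_eq_two h2] at hroot ⊢
    field_simp
    linear_combination c * hroot
  have hdvd : minpoly K x ∣ X ^ n - 1 := minpoly.dvd K x (by simp [hx])
  have hpow : (c / x) ^ n = 1 := by
    simpa [sub_eq_zero] using aeval_eq_zero_of_dvd_aeval_eq_zero hdvd hroot'
  apply (algebraMap K E).injective
  rw [map_pow, map_one, ← hpow, div_pow, hx, div_one]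

theorem add_inv_eq_neg_coeff_one_minpoly {x : E} (hx0 : x ≠ 0)
    (h2 : (minpoly K x).natDegree = 2) (h1 : (minpoly K x).coeff 0 = 1) :
    x + x⁻¹ = -algebraMap K E ((minpoly K x).coeff 1) := by
  have hmonic : (minpoly K x).Monic := minpoly.monic <| minpoly.ne_zero_iff.mp <| by
    rintro h; simp [h] at h2
  have hroot : aeval x (minpoly K x) = 0 := minpoly.aeval K x
  rw [hmonic.aeval_of_natDegree_eq_two h2, h1, map_one] at hroot
  field_simp
  linear_combination hroot

theorem natDegree_minpoly_le_two_of_add_inv_mem {L : IntermediateField K E} {x : E}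
    (hx0 : x ≠ 0) (hL : x + x⁻¹ ∈ L) : (minpoly L x).natDegree ≤ 2 := by
  set q : L[X] := X ^ 2 - C ⟨x + x⁻¹, hL⟩ * X + 1
  have hq : q.natDegree = 2 := by unfold q; compute_degree!
  have hqx : aeval x q = 0 := by
    simp only [q, map_add, map_sub, map_mul, map_pow, map_one, aeval_X, aeval_C]
    change x ^ 2 - (x + x⁻¹) * x + 1 = 0
    field_simp
    ring
  exact hq ▸ natDegree_le_natDegree (minpoly.degree_le_of_ne_zero L x
    (by rintro h; simp [h] at hq) hqx)

namespace IsPrimitiveRoot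

variable {p : ℕ} {ζ : E}

theorem add_inv_mem_of_natDegree_minpoly_le_two (hp : p.Prime) (hζ : IsPrimitiveRoot ζ p)
    {L : IntermediateField K E} (hd : (minpoly L ζ).natDegree ≤ 2) : ζ + ζ⁻¹ ∈ L := by
  by_cases hζL : ζ ∈ L
  · exact add_mem hζL (inv_mem hζL)
  have h2 : (minpoly L ζ).natDegree = 2 := by
    refine le_antisymm hd
      ((minpoly.two_le_natDegree_iff (hζ.isIntegral hp.pos).tower_top).2 ?_)
    rintro ⟨y, rfl⟩
    exact hζL y.2
  have hc := coeff_zero_minpoly_pow_eq_one hp.ne_zero hζ.pow_eq_one h2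
  rcases eq_or_ne ((minpoly L ζ).coeff 0) 1 with hc1 | hc1
  · rw [add_inv_eq_neg_coeff_one_minpoly (hζ.ne_zero hp.ne_zero) h2 hc1]
    exact neg_mem ((minpoly L ζ).coeff 1).2
  · have : Fact p.Prime := ⟨hp⟩
    have hcprim : IsPrimitiveRoot (algebraMap L E ((minpoly L ζ).coeff 0)) p :=
      (orderOf_eq_prime hc hc1 ▸ IsPrimitiveRoot.orderOf _).map_of_injective
        (algebraMap L E).injective
    obtain ⟨i, -, hi⟩ := hcprim.eq_pow_of_pow_eq_one hζ.pow_eq_one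
    exact absurd (hi ▸ pow_mem ((minpoly L ζ).coeff 0).2 i) hζL

theorem add_inv_mem_iff_relfinrank_sup_le_two (hp : p.Prime) (hζ : IsPrimitiveRoot ζ p)
    (L : IntermediateField K E) : ζ + ζ⁻¹ ∈ L ↔ relfinrank L (L ⊔ adjoin K {ζ}) ≤ 2 := by
  rw [relfinrank_sup_adjoin_simple L (hζ.isIntegral hp.pos).tower_top]
  exact ⟨natDegree_minpoly_le_two_of_add_inv_mem (hζ.ne_zero hp.ne_zero),
    hζ.add_inv_mem_of_natDegree_minpoly_le_two hp⟩

end IsPrimitiveRoot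

end

namespace IsPrimitiveRoot

variable {p : ℕ} {ζ : ℂ}

theorem conj_add_inv (hp : p ≠ 0) (hζ : IsPrimitiveRoot ζ p) :
    starRingEnd ℂ (ζ + ζ⁻¹) = ζ + ζ⁻¹ := by
  have hconj : ζ⁻¹ = starRingEnd ℂ ζ :=
    Complex.inv_eq_conj (Complex.norm_eq_one_of_pow_eq_one hζ.pow_eq_one hp)
  rw [map_add, map_inv₀, ← hconj, inv_inv, add_comm]

theorem ne_ofReal (hp : 1 < p) (hodd : Odd p) (hζ : IsPrimitiveRoot ζ p) (r : ℝ) :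
    ζ ≠ r := by
  rintro rfl
  have hr : r ^ p = 1 ^ p := by exact_mod_cast hζ.pow_eq_one.trans (one_pow p).symm
  exact hζ.ne_one hp (by rw [hodd.strictMono_pow.injective hr, Complex.ofReal_one])

theorem not_mem_adjoin_add_inv (hp : 1 < p) (hodd : Odd p) (hζ : IsPrimitiveRoot ζ p) :
    ζ ∉ adjoin ℚ {ζ + ζ⁻¹} := by
  have hreal : adjoin ℚ {ζ + ζ⁻¹} ≤ (Complex.ofRealAm.restrictScalars ℚ).fieldRange :=
    adjoin_simple_le_iff.2 <| by
      obtain ⟨r, hr⟩ := Complex.conj_eq_iff_real.mp (hζ.conj_add_inv (by omega))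
      exact ⟨r, hr.symm⟩
  intro hζmem
  obtain ⟨r, hr⟩ := hreal hζmem
  exact hζ.ne_ofReal hp hodd r hr.symm

theorem relfinrank_adjoin_add_inv (hp : p.Prime) (hodd : Odd p) (hζ : IsPrimitiveRoot ζ p) :
    relfinrank (adjoin ℚ {ζ + ζ⁻¹}) (adjoin ℚ {ζ}) = 2 := by
  have hle := adjoin_simple_add_inv_le (K := ℚ) ζ
  have hint := (hζ.isIntegral hp.pos).tower_top (A := adjoin ℚ {ζ + ζ⁻¹})
  rw [← sup_eq_right.2 hle, relfinrank_sup_adjoin_simple _ hint]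
  refine le_antisymm (natDegree_minpoly_le_two_of_add_inv_mem (hζ.ne_zero hp.ne_zero)
    (mem_adjoin_simple_self ℚ _)) ((minpoly.two_le_natDegree_iff hint).2 ?_)
  rintro ⟨y, hy : (y : ℂ) = ζ⟩
  have hy_mem := y.2
  rw [hy] at hy_mem
  exact hζ.not_mem_adjoin_add_inv hp.one_lt hodd hy_mem

end IsPrimitiveRoot

/-- For an odd prime `p`, a characteristic-zero field `k` (realized as an
intermediate field of `ℚ ⊆ ℂ`) and a primitive `p`-th root of unity `ζ`,
one has `[k(ζ) : k] ≤ 2` iff `k` contains the unique subfield `F` of `ℚ(ζ)` with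
`[ℚ(ζ) : F] = 2`. -/
theorem stmt2 (p : ℕ) (hp : p.Prime) (hodd : Odd p)
    (k : IntermediateField ℚ ℂ) (ζ : ℂ) (hζ : IsPrimitiveRoot ζ p) :
    relfinrank k (k ⊔ IntermediateField.adjoin ℚ {ζ}) ≤ 2 ↔
      ∃ F : IntermediateField ℚ ℂ,
        F ≤ IntermediateField.adjoin ℚ {ζ} ∧
        relfinrank F (IntermediateField.adjoin ℚ {ζ}) = 2 ∧
        (∀ F' : IntermediateField ℚ ℂ, F' ≤ IntermediateField.adjoin ℚ {ζ} →
          relfinrank F' (IntermediateField.adjoin ℚ {ζ}) = 2 → F' = F) ∧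
        F ≤ k := by
  have key := hζ.add_inv_mem_iff_relfinrank_sup_le_two (K := ℚ) hp
  have hle := adjoin_simple_add_inv_le (K := ℚ) ζ
  have hrank := hζ.relfinrank_adjoin_add_inv hp hodd
  have huniq : ∀ F' : IntermediateField ℚ ℂ, F' ≤ adjoin ℚ {ζ} →
      relfinrank F' (adjoin ℚ {ζ}) = 2 → F' = adjoin ℚ {ζ + ζ⁻¹} := by
    intro F' hF' hF'rank
    have hmem : ζ + ζ⁻¹ ∈ F' := (key F').2 (by rw [sup_eq_right.2 hF', hF'rank])
    exact (eq_of_le_of_relfinrank_eq (adjoin_simple_le_iff.2 hmem) hF'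
      (hrank.trans hF'rank.symm) (by omega)).symm
  rw [← key]
  refine ⟨fun h ↦ ⟨_, hle, hrank, huniq, adjoin_simple_le_iff.2 h⟩, ?_⟩
  rintro ⟨F, -, -, hF, hFk⟩
  exact hFk (hF _ hle hrank ▸ mem_adjoin_simple_self ℚ _)
end

section
/- Let G be a finite non-trivial abelian group that is not isomorphic to any of: ℤ/nℤ (n ≥ 2), (ℤ/pℤ)² (p prime), ℤ/2ℤ × ℤ/2pℤ (p prime), ℤ/3ℤ × ℤ/3pℤ (p prime), ℤ/2ℤ × ℤ/8ℤ, (ℤ/4ℤ)², (ℤ/2ℤ)³, (ℤ/2ℤ)² × ℤ/4ℤ, (ℤ/3ℤ)³, (ℤ/2ℤ)⁴. Then G has a non-trivial proper subgroup H such that G/H is isomorphic to none of the groups: ℤ/nℤ (n ≥ 2), (ℤ/2ℤ)², ℤ/2ℤ × ℤ/4ℤ, (ℤ/3ℤ)², (ℤ/2ℤ)³. -/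
open Function

namespace Stmt9Helpers

def zmodCongr {m n : ℕ} (h : m = n) : ZMod m ≃+ ZMod n := by
  subst h; exact AddEquiv.refl _

def zmodCast {m n : ℕ} (h : m ∣ n) : ZMod n →+ ZMod m :=
  (ZMod.castHom h (ZMod m)).toAddMonoidHom

lemma zmodCast_surj {m n : ℕ} (h : m ∣ n) : Surjective (zmodCast h) :=
  ZMod.ringHom_surjective _

noncomputable def crt {m n : ℕ} (h : Nat.Coprime m n) : ZMod (m * n) ≃+ ZMod m × ZMod n :=
  (ZMod.chineseRemainder h).toAddEquiv

def swapLeft {A B C : Type*} [AddCommGroup A] [AddCommGroup B] [AddCommGroup C] :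
    A × (B × C) ≃+ B × (A × C) :=
  ((AddEquiv.prodAssoc : (A × B) × C ≃+ A × (B × C)).symm.trans
    ((AddEquiv.prodCongr AddEquiv.prodComm (AddEquiv.refl C)).trans
      (AddEquiv.prodAssoc : (B × A) × C ≃+ B × (A × C))))

lemma expBound {T : Type*} [AddCommGroup T] (n : ℕ) (hn : n ≠ 0) (h : ∀ x : T, n • x = 0) :
    AddMonoid.exponent T ≤ n :=
  Nat.le_of_dvd (by omega) (AddMonoid.exponent_dvd_of_forall_nsmul_eq_zero h)

lemma zmod_nsmul_zero {k n : ℕ} (h : k ∣ n) (x : ZMod k) : n • x = 0 := by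
  obtain ⟨c, rfl⟩ := h
  simp [nsmul_eq_mul, Nat.cast_mul, ZMod.natCast_self]

lemma prod_nsmul_zero {A B : Type*} [AddMonoid A] [AddMonoid B] {n : ℕ}
    (ha : ∀ x : A, n • x = 0) (hb : ∀ y : B, n • y = 0) (z : A × B) : n • z = 0 :=
  Prod.ext (by simpa using ha z.1) (by simpa using hb z.2)

/-- Split off one cyclic prime-power factor at a given prime dividing the order. -/
lemma split (R : Type*) [AddCommGroup R] [Finite R] (l : ℕ) (hl : l.Prime)
    (hdvd : l ∣ Nat.card R) :
    ∃ e : ℕ, 1 ≤ e ∧ ∃ (R' : Type) (_ : AddCommGroup R') (_ : Finite R'),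
      Nonempty (R ≃+ ZMod (l ^ e) × R') := by
  classical
  obtain ⟨ι, hι, p, hp, n, ⟨f⟩⟩ := AddCommGroup.equiv_directSum_zmod_of_finite R
  let g : R ≃+ ∀ i, ZMod (p i ^ n i) := f.trans (DirectSum.addEquivProd _)
  have hcard : Nat.card R = ∏ i, p i ^ n i := by
    rw [Nat.card_congr g.toEquiv, Nat.card_pi]
    simp [Nat.card_zmod]
  rw [hcard] at hdvd
  obtain ⟨i, -, hi⟩ := (Nat.Prime.prime hl).exists_mem_finset_dvd hdvd
  have hpi : l = p i :=
    (Nat.prime_dvd_prime_iff_eq hl (hp i)).mp (hl.dvd_of_dvd_pow hi)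
  have hni : n i ≠ 0 := by
    rintro h0
    rw [h0, pow_zero, Nat.dvd_one] at hi
    exact hl.one_lt.ne' hi
  have e2 : (∀ j, ZMod (p j ^ n j)) ≃+
      ZMod (p i ^ n i) × ∀ j : {j // j ≠ i}, ZMod (p j ^ n j) :=
    { Equiv.piSplitAt i _ with map_add' := fun x y => rfl }
  haveI : ∀ j : {j // j ≠ i}, Finite (ZMod (p j.1 ^ n j.1)) := fun j => by
    haveI : NeZero (p j.1 ^ n j.1) := ⟨pow_ne_zero _ (hp j.1).pos.ne'⟩
    infer_instance
  have c : ZMod (p i ^ n i) ≃+ ZMod (l ^ n i) := zmodCongr (by rw [hpi])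
  exact ⟨n i, Nat.one_le_iff_ne_zero.mpr hni, _, inferInstance, inferInstance,
    ⟨g.trans (e2.trans (AddEquiv.prodCongr c (AddEquiv.refl _)))⟩⟩

def Pair (G : Type*) [AddCommGroup G] : Prop :=
  ∃ p a b, Nat.Prime p ∧ 1 ≤ a ∧ a ≤ b ∧ ∃ (R : Type) (_ : AddCommGroup R) (_ : Finite R),
      Nonempty (G ≃+ (ZMod (p ^ a) × ZMod (p ^ b)) × R)

lemma assemble {G : Type*} [AddCommGroup G] {p s t : ℕ} (hp : p.Prime) (hs : 1 ≤ s)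
    (ht : 1 ≤ t) {R : Type} [AddCommGroup R] [Finite R]
    (h : Nonempty (G ≃+ (ZMod (p ^ s) × ZMod (p ^ t)) × R)) : Pair G := by
  obtain ⟨u⟩ := h
  rcases le_total s t with hst | hst
  · exact ⟨p, s, t, hp, hs, hst, R, inferInstance, inferInstance, ⟨u⟩⟩
  · exact ⟨p, t, s, hp, ht, hst, R, inferInstance, inferInstance,
      ⟨u.trans (AddEquiv.prodCongr AddEquiv.prodComm (AddEquiv.refl R))⟩⟩

lemma start0aux (N : ℕ) : ∀ (G : Type) [AddCommGroup G] [Finite G] [Nontrivial G],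
    Nat.card G ≤ N → (∃ n, 2 ≤ n ∧ Nonempty (G ≃+ ZMod n)) ∨ Pair G := by
  induction N with
  | zero =>
    intro G _ _ _ h
    have := Nat.card_pos (α := G)
    omega
  | succ N ih =>
    intro G _ _ _ hN
    have hG1 : 1 < Nat.card G := Finite.one_lt_card_iff_nontrivial.mpr ‹Nontrivial G›
    set l := (Nat.card G).minFac with hldef
    have hl : l.Prime := Nat.minFac_prime (by omega)
    obtain ⟨e1, he1, R1, _, _, ⟨g⟩⟩ := split G l hl (Nat.minFac_dvd _)
    have hcard : Nat.card G = l ^ e1 * Nat.card R1 := by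
      rw [Nat.card_congr g.toEquiv, Nat.card_prod, Nat.card_zmod]
    have hle2 : 2 ≤ l ^ e1 := le_trans hl.two_le (Nat.le_self_pow (by omega) _)
    have hR1pos : 0 < Nat.card R1 := Nat.card_pos
    by_cases hR1 : Nat.card R1 = 1
    · left
      obtain ⟨hs, -⟩ := Nat.card_eq_one_iff_unique.mp hR1
      haveI : Inhabited R1 := ⟨0⟩
      haveI : Unique R1 := Unique.mk' R1
      exact ⟨l ^ e1, hle2, ⟨g.trans AddEquiv.prodUnique⟩⟩
    · haveI hnt : Nontrivial R1 := Finite.one_lt_card_iff_nontrivial.mp (by omega)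
      have hlt : Nat.card R1 ≤ N := by
        have h2 : 2 * Nat.card R1 ≤ l ^ e1 * Nat.card R1 := Nat.mul_le_mul_right _ hle2
        omega
      rcases ih R1 hlt with ⟨n, hn, ⟨u⟩⟩ | ⟨q, a, b, hq, ha, hab, R', _, _, ⟨u⟩⟩
      · by_cases hdvd : l ∣ n
        · have hn0 : n ≠ 0 := by omega
          have hv1 : 1 ≤ n.factorization l := Nat.Prime.factorization_pos_of_dvd hl hn0 hdvd
          have hco : Nat.Coprime (l ^ n.factorization l) (n / l ^ n.factorization l) :=
            Nat.Coprime.pow_left _ (Nat.coprime_ordCompl hl hn0)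
          have heq : l ^ n.factorization l * (n / l ^ n.factorization l) = n :=
            Nat.ordProj_mul_ordCompl_eq_self n l
          have c : ZMod n ≃+ ZMod (l ^ n.factorization l * (n / l ^ n.factorization l)) :=
            zmodCongr heq.symm
          have w : ZMod n ≃+ ZMod (l ^ n.factorization l) × ZMod (n / l ^ n.factorization l) :=
            c.trans (crt hco)
          right
          haveI : NeZero (n / l ^ n.factorization l) := ⟨by
            intro h0
            rw [h0, mul_zero] at heq
            exact hn0 heq.symm⟩
          refine assemble (R := ZMod (n / l ^ n.factorization l)) hl he1 hv1 ⟨?_⟩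
          exact (g.trans (AddEquiv.prodCongr (AddEquiv.refl _) (u.trans w))).trans
            AddEquiv.prodAssoc.symm
        · left
          have hco : Nat.Coprime (l ^ e1) n :=
            Nat.Coprime.pow_left _ ((Nat.Prime.coprime_iff_not_dvd hl).mpr hdvd)
          refine ⟨l ^ e1 * n, ?_, ⟨(g.trans (AddEquiv.prodCongr (AddEquiv.refl _) u)).trans
            (crt hco).symm⟩⟩
          calc 2 ≤ l ^ e1 := hle2
            _ ≤ l ^ e1 * n := Nat.le_mul_of_pos_right _ (by omega)
      · right
        haveI : NeZero (l ^ e1) := ⟨pow_ne_zero _ hl.pos.ne'⟩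
        refine ⟨q, a, b, hq, ha, hab, ZMod (l ^ e1) × R', inferInstance, inferInstance, ⟨?_⟩⟩
        exact (g.trans (AddEquiv.prodCongr (AddEquiv.refl _) u)).trans swapLeft

lemma start0 (G : Type) [AddCommGroup G] [Finite G] [Nontrivial G] :
    (∃ n, 2 ≤ n ∧ Nonempty (G ≃+ ZMod n)) ∨ Pair G :=
  start0aux (Nat.card G) G le_rfl

abbrev Concl (G : Type*) [AddCommGroup G] : Prop :=
  ∃ H : AddSubgroup G, H ≠ ⊥ ∧ H ≠ ⊤ ∧
      (¬ ∃ n : ℕ, 2 ≤ n ∧ Nonempty ((G ⧸ H) ≃+ ZMod n)) ∧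
      (¬ Nonempty ((G ⧸ H) ≃+ (ZMod 2 × ZMod 2))) ∧
      (¬ Nonempty ((G ⧸ H) ≃+ (ZMod 2 × ZMod 4))) ∧
      (¬ Nonempty ((G ⧸ H) ≃+ (ZMod 3 × ZMod 3))) ∧
      (¬ Nonempty ((G ⧸ H) ≃+ (ZMod 2 × ZMod 2 × ZMod 2)))

lemma notBad (Q : Type*) [AddCommGroup Q] [Finite Q]
    (c4 : Nat.card Q ≠ 4) (c8 : Nat.card Q ≠ 8) (c9 : Nat.card Q ≠ 9)
    (hexp : AddMonoid.exponent Q < Nat.card Q) :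
    (¬ ∃ n : ℕ, 2 ≤ n ∧ Nonempty (Q ≃+ ZMod n)) ∧
      (¬ Nonempty (Q ≃+ (ZMod 2 × ZMod 2))) ∧
      (¬ Nonempty (Q ≃+ (ZMod 2 × ZMod 4))) ∧
      (¬ Nonempty (Q ≃+ (ZMod 3 × ZMod 3))) ∧
      (¬ Nonempty (Q ≃+ (ZMod 2 × ZMod 2 × ZMod 2))) := by
  have hcard : ∀ {m k : ℕ}, Nonempty (Q ≃+ (ZMod m × ZMod k)) → Nat.card Q = m * k := by
    rintro m k ⟨u⟩
    rw [Nat.card_congr u.toEquiv, Nat.card_prod, Nat.card_zmod, Nat.card_zmod]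
  refine ⟨?_, fun h => c4 (hcard h), fun h => c8 (hcard h), fun h => c9 (hcard h), ?_⟩
  · rintro ⟨n, hn, ⟨u⟩⟩
    have hc : Nat.card Q = n := by rw [Nat.card_congr u.toEquiv, Nat.card_zmod]
    haveI : NeZero n := ⟨by omega⟩
    have h1 : addOrderOf (u.symm (1 : ZMod n)) = n := by
      have := addOrderOf_injective u.symm.toAddMonoidHom u.symm.injective (1 : ZMod n)
      rw [ZMod.addOrderOf_one] at this
      exact this
    have h2 := AddMonoid.addOrder_dvd_exponent (u.symm (1 : ZMod n))
    rw [h1] at h2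
    have h3 : AddMonoid.exponent Q ≠ 0 := AddMonoid.exponent_ne_zero_of_finite
    have h4 := Nat.le_of_dvd (by omega) h2
    omega
  · rintro ⟨u⟩
    have : Nat.card Q = 8 := by
      rw [Nat.card_congr u.toEquiv, Nat.card_prod, Nat.card_prod]
      simp [Nat.card_zmod]
    exact c8 this

lemma build {G : Type*} [AddCommGroup G] [Finite G] {T : Type*} [AddCommGroup T] [Finite T]
    (f : G →+ T) (hf : Surjective f) (hT : Nontrivial T)
    (hlt : Nat.card T < Nat.card G)
    (c4 : Nat.card T ≠ 4) (c8 : Nat.card T ≠ 8) (c9 : Nat.card T ≠ 9)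
    (hexp : AddMonoid.exponent T < Nat.card T) : Concl G := by
  have iso : (G ⧸ f.ker) ≃+ T := QuotientAddGroup.quotientKerEquivOfSurjective f hf
  have hcQ : Nat.card (G ⧸ f.ker) = Nat.card T := Nat.card_congr iso.toEquiv
  have hexpQ : AddMonoid.exponent (G ⧸ f.ker) = AddMonoid.exponent T := by
    apply Nat.dvd_antisymm
    · refine AddMonoid.exponent_dvd_of_forall_nsmul_eq_zero fun x => ?_
      have := AddMonoid.exponent_nsmul_eq_zero (G := T) (iso x)
      apply iso.injective
      rw [map_nsmul, map_zero]
      exact this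
    · refine AddMonoid.exponent_dvd_of_forall_nsmul_eq_zero fun t => ?_
      have := AddMonoid.exponent_nsmul_eq_zero (G := G ⧸ f.ker) (iso.symm t)
      have h2 : iso (AddMonoid.exponent (G ⧸ f.ker) • iso.symm t) = 0 := by
        rw [this, map_zero]
      rwa [map_nsmul, AddEquiv.apply_symm_apply] at h2
  obtain ⟨k1, k2, k3, k4, k5⟩ := notBad (G ⧸ f.ker) (by omega) (by omega) (by omega) (by omega)
  refine ⟨f.ker, ?_, ?_, k1, k2, k3, k4, k5⟩
  · intro h
    rw [AddMonoidHom.ker_eq_bot_iff] at h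
    exact absurd (Nat.card_eq_of_bijective f ⟨h, hf⟩) (by omega)
  · intro h
    obtain ⟨x, y, hxy⟩ := hT
    obtain ⟨x', rfl⟩ := hf x
    obtain ⟨y', rfl⟩ := hf y
    have hx : f x' = 0 := by
      have : x' ∈ f.ker := by rw [h]; trivial
      simpa [AddMonoidHom.mem_ker] using this
    have hy : f y' = 0 := by
      have : y' ∈ f.ker := by rw [h]; trivial
      simpa [AddMonoidHom.mem_ker] using this
    exact hxy (hx.trans hy.symm)

lemma finish {G : Type*} [AddCommGroup G] [Finite G] {T : Type*} [AddCommGroup T] [Finite T]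
    (f : G →+ T) (hf : Surjective f) (n : ℕ) (hn : n ≠ 0)
    (hsm : ∀ x : T, n • x = 0) (hTcard : 1 < Nat.card T)
    (c4 : Nat.card T ≠ 4) (c8 : Nat.card T ≠ 8) (c9 : Nat.card T ≠ 9)
    (hnc : n < Nat.card T)
    (hor : Nat.card T = Nat.card G → False) : Concl G := by
  rcases lt_or_eq_of_le (Nat.card_le_card_of_surjective f hf) with hlt | heq
  · exact build f hf (Finite.one_lt_card_iff_nontrivial.mp hTcard) hlt c4 c8 c9
      (lt_of_le_of_lt (expBound n hn hsm) hnc)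
  · exact (hor heq).elim

/-- Make the group iso from a surjection with equal cardinalities. -/
noncomputable def eqIso {G : Type*} [AddCommGroup G] [Finite G] {T : Type*} [AddCommGroup T]
    (f : G →+ T) (hf : Surjective f) (heq : Nat.card T = Nat.card G) : G ≃+ T :=
  AddEquiv.ofBijective f ((Nat.bijective_iff_surjective_and_card f).mpr ⟨hf, heq.symm⟩)

def assocHom {T1 T2 T3 : Type*} [AddCommGroup T1] [AddCommGroup T2] [AddCommGroup T3] :
    (T1 × T2) × T3 →+ T1 × (T2 × T3) :=
  (AddEquiv.prodAssoc : (T1 × T2) × T3 ≃+ T1 × (T2 × T3)).toAddMonoidHom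

/-- Surjection onto a three-fold product from `(A × B) × S`. -/
lemma surj3 {A B S T1 T2 T3 : Type*} [AddCommGroup A] [AddCommGroup B] [AddCommGroup S]
    [AddCommGroup T1] [AddCommGroup T2] [AddCommGroup T3]
    (g1 : A →+ T1) (g2 : B →+ T2) (g3 : S →+ T3)
    (s1 : Surjective g1) (s2 : Surjective g2) (s3 : Surjective g3) :
    ∃ f : (A × B) × S →+ T1 × (T2 × T3), Surjective f :=
  ⟨assocHom.comp ((g1.prodMap g2).prodMap g3),
    ((AddEquiv.prodAssoc : (T1 × T2) × T3 ≃+ T1 × (T2 × T3)).surjective).comp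
      ((s1.prodMap s2).prodMap s3)⟩

end Stmt9Helpers

set_option maxHeartbeats 2000000 in
open Stmt9Helpers Function in
/-- A finite non-trivial abelian group that is not isomorphic to any of
`ℤ/nℤ (n ≥ 2)`, `(ℤ/pℤ)²`, `ℤ/2ℤ × ℤ/2pℤ`, `ℤ/3ℤ × ℤ/3pℤ` (`p` prime),
`ℤ/2ℤ × ℤ/8ℤ`, `(ℤ/4ℤ)²`, `(ℤ/2ℤ)³`, `(ℤ/2ℤ)² × ℤ/4ℤ`, `(ℤ/3ℤ)³`, `(ℤ/2ℤ)⁴`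
admits a non-trivial proper subgroup `H` such that `G/H` is isomorphic to none of
`ℤ/nℤ (n ≥ 2)`, `(ℤ/2ℤ)²`, `ℤ/2ℤ × ℤ/4ℤ`, `(ℤ/3ℤ)²`, `(ℤ/2ℤ)³`. -/
theorem stmt9 (G : Type*) [AddCommGroup G] [Finite G] [Nontrivial G]
    (h1 : ¬ ∃ n : ℕ, 2 ≤ n ∧ Nonempty (G ≃+ ZMod n))
    (h2 : ¬ ∃ p : ℕ, p.Prime ∧ Nonempty (G ≃+ (ZMod p × ZMod p)))
    (h3 : ¬ ∃ p : ℕ, p.Prime ∧ Nonempty (G ≃+ (ZMod 2 × ZMod (2 * p))))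
    (h4 : ¬ ∃ p : ℕ, p.Prime ∧ Nonempty (G ≃+ (ZMod 3 × ZMod (3 * p))))
    (h5 : ¬ Nonempty (G ≃+ (ZMod 2 × ZMod 8)))
    (h6 : ¬ Nonempty (G ≃+ (ZMod 4 × ZMod 4)))
    (h7 : ¬ Nonempty (G ≃+ (ZMod 2 × ZMod 2 × ZMod 2)))
    (h8 : ¬ Nonempty (G ≃+ (ZMod 2 × ZMod 2 × ZMod 4)))
    (h9 : ¬ Nonempty (G ≃+ (ZMod 3 × ZMod 3 × ZMod 3)))
    (h10 : ¬ Nonempty (G ≃+ (ZMod 2 × ZMod 2 × ZMod 2 × ZMod 2))) :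
    ∃ H : AddSubgroup G, H ≠ ⊥ ∧ H ≠ ⊤ ∧
      (¬ ∃ n : ℕ, 2 ≤ n ∧ Nonempty ((G ⧸ H) ≃+ ZMod n)) ∧
      (¬ Nonempty ((G ⧸ H) ≃+ (ZMod 2 × ZMod 2))) ∧
      (¬ Nonempty ((G ⧸ H) ≃+ (ZMod 2 × ZMod 4))) ∧
      (¬ Nonempty ((G ⧸ H) ≃+ (ZMod 3 × ZMod 3))) ∧
      (¬ Nonempty ((G ⧸ H) ≃+ (ZMod 2 × ZMod 2 × ZMod 2))) := by
  classical
  -- move to a `Type 0` model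
  obtain ⟨ι, hι, pp, hpp, nn, ⟨f0⟩⟩ := AddCommGroup.equiv_directSum_zmod_of_finite G
  haveI : ∀ i : ι, NeZero (pp i ^ nn i) := fun i => ⟨pow_ne_zero _ (hpp i).pos.ne'⟩
  let P : Type := ∀ i, ZMod (pp i ^ nn i)
  have e0 : G ≃+ P := f0.trans (DirectSum.addEquivProd _)
  haveI : Nontrivial P := (e0.symm.toEquiv).nontrivial
  rcases start0 P with ⟨n, hn, ⟨u⟩⟩ | ⟨p, a, b, hp, ha, hab, R, _, _, ⟨u0⟩⟩
  · exact absurd ⟨n, hn, ⟨e0.trans u⟩⟩ h1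
  have e : G ≃+ (ZMod (p ^ a) × ZMod (p ^ b)) × R := e0.trans u0
  clear u0 e0 f0
  haveI : NeZero (p ^ a) := ⟨pow_ne_zero _ hp.pos.ne'⟩
  haveI : NeZero (p ^ b) := ⟨pow_ne_zero _ hp.pos.ne'⟩
  have hcG : Nat.card G = p ^ a * p ^ b * Nat.card R := by
    rw [Nat.card_congr e.toEquiv]; simp only [Nat.card_prod, Nat.card_zmod]
  have hcRpos : 0 < Nat.card R := Nat.card_pos
  show Concl G
  haveI : NeZero p := ⟨hp.pos.ne'⟩
  by_cases hp5 : 5 ≤ p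
  · -- p ≥ 5 : target (Z/p)²
    have d1 : p ∣ p ^ a := dvd_pow_self p (by omega)
    have d2 : p ∣ p ^ b := dvd_pow_self p (by omega)
    set f : G →+ ZMod p × ZMod p :=
      (((zmodCast d1).prodMap (zmodCast d2)).comp (AddMonoidHom.fst _ _)).comp e.toAddMonoidHom
      with hfdef
    have hf : Surjective f :=
      (((zmodCast_surj d1).prodMap (zmodCast_surj d2)).comp Prod.fst_surjective).comp e.surjective
    have hcT : Nat.card (ZMod p × ZMod p) = p * p := by
      simp only [Nat.card_prod, Nat.card_zmod]
    refine finish f hf p (by omega)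
      (prod_nsmul_zero (zmod_nsmul_zero dvd_rfl) (zmod_nsmul_zero dvd_rfl))
      (by rw [hcT]; nlinarith) (by rw [hcT]; nlinarith) (by rw [hcT]; nlinarith)
      (by rw [hcT]; nlinarith) (by rw [hcT]; nlinarith) ?_
    intro heq
    exact h2 ⟨p, hp, ⟨eqIso f hf heq⟩⟩
  · have hp23 : p = 2 ∨ p = 3 := by
      have h2le := hp.two_le
      interval_cases p
      · exact Or.inl rfl
      · exact Or.inr rfl
      · exact absurd hp (by decide)
    rcases hp23 with rfl | rfl
    · -- p = 2
      by_cases hb3 : 3 ≤ b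
      · -- target Z/2 × Z/8
        have d1 : (2:ℕ) ∣ 2 ^ a := dvd_pow_self 2 (by omega)
        have d2 : (8:ℕ) ∣ 2 ^ b := by
          rw [show (8:ℕ) = 2 ^ 3 by norm_num]; exact pow_dvd_pow 2 hb3
        set f : G →+ ZMod 2 × ZMod 8 :=
          (((zmodCast d1).prodMap (zmodCast d2)).comp (AddMonoidHom.fst _ _)).comp
            e.toAddMonoidHom with hfdef
        have hf : Surjective f :=
          (((zmodCast_surj d1).prodMap (zmodCast_surj d2)).comp
            Prod.fst_surjective).comp e.surjective
        have hcT : Nat.card (ZMod 2 × ZMod 8) = 16 := by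
          simp only [Nat.card_prod, Nat.card_zmod]
        refine finish f hf 8 (by omega)
          (prod_nsmul_zero (zmod_nsmul_zero (by norm_num)) (zmod_nsmul_zero dvd_rfl))
          (by omega) (by omega) (by omega) (by omega) (by omega) ?_
        intro heq
        exact h5 ⟨eqIso f hf heq⟩
      · by_cases ha2 : a = 2
        · -- then b = 2 as well: target Z/4 × Z/4
          have hb2 : b = 2 := by omega
          subst ha2; subst hb2
          have d1 : (4:ℕ) ∣ 2 ^ 2 := by norm_num
          set f : G →+ ZMod 4 × ZMod 4 :=
            (((zmodCast d1).prodMap (zmodCast d1)).comp (AddMonoidHom.fst _ _)).comp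
              e.toAddMonoidHom with hfdef
          have hf : Surjective f :=
            (((zmodCast_surj d1).prodMap (zmodCast_surj d1)).comp
              Prod.fst_surjective).comp e.surjective
          have hcT : Nat.card (ZMod 4 × ZMod 4) = 16 := by
            simp only [Nat.card_prod, Nat.card_zmod]
          refine finish f hf 4 (by omega)
            (prod_nsmul_zero (zmod_nsmul_zero dvd_rfl) (zmod_nsmul_zero dvd_rfl))
            (by omega) (by omega) (by omega) (by omega) (by omega) ?_
          intro heq
          exact h6 ⟨eqIso f hf heq⟩
        · -- a = 1, b ∈ {1, 2}
          have ha1 : a = 1 := by omega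
          subst ha1
          by_cases hR : Nat.card R = 1
          · -- G itself is (Z/2) × (Z/2^b): excluded by h2 / h3
            obtain ⟨hs, -⟩ := Nat.card_eq_one_iff_unique.mp hR
            haveI : Inhabited R := ⟨0⟩
            haveI : Unique R := Unique.mk' R
            have eG : G ≃+ ZMod (2 ^ 1) × ZMod (2 ^ b) := e.trans AddEquiv.prodUnique
            by_cases hb1 : b = 1
            · subst hb1
              exact absurd ⟨2, by norm_num, ⟨eG.trans (AddEquiv.prodCongr
                (zmodCongr (by norm_num)) (zmodCongr (by norm_num)))⟩⟩ h2
            · have hb2 : b = 2 := by omega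
              subst hb2
              exact absurd ⟨2, by norm_num, ⟨eG.trans (AddEquiv.prodCongr
                (zmodCongr (by norm_num)) (zmodCongr (by norm_num)))⟩⟩ h3
          · -- split off another factor
            obtain ⟨l, hldef⟩ : ∃ l, l = (Nat.card R).minFac := ⟨_, rfl⟩
            have hl : l.Prime := hldef ▸ Nat.minFac_prime (by omega)
            haveI : NeZero l := ⟨hl.pos.ne'⟩
            obtain ⟨e1, he1, R', _, _, ⟨u⟩⟩ := split R l hl (hldef ▸ Nat.minFac_dvd _)
            have e2 : G ≃+ (ZMod (2 ^ 1) × ZMod (2 ^ b)) × (ZMod (l ^ e1) × R') :=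
              e.trans (AddEquiv.prodCongr (AddEquiv.refl _) u)
            have hcR' : 0 < Nat.card R' := Nat.card_pos
            have hcG2 : Nat.card G = 2 ^ 1 * 2 ^ b * (l ^ e1 * Nat.card R') := by
              rw [Nat.card_congr e2.toEquiv]
              simp only [Nat.card_prod, Nat.card_zmod]
            have d1 : (2:ℕ) ∣ 2 ^ 1 := by norm_num
            by_cases hl2 : l = 2
            · subst hl2
              by_cases he2 : 2 ≤ e1
              · -- third factor has a Z/4 quotient: target Z/2 × (Z/2 × Z/4)
                have d2 : (2:ℕ) ∣ 2 ^ b := dvd_pow_self 2 (by omega)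
                have d3 : (4:ℕ) ∣ 2 ^ e1 := by
                  rw [show (4:ℕ) = 2 ^ 2 by norm_num]; exact pow_dvd_pow 2 he2
                obtain ⟨f3, hf3⟩ := surj3 (zmodCast d1) (zmodCast d2)
                  ((zmodCast d3).comp (AddMonoidHom.fst _ R'))
                  (zmodCast_surj d1) (zmodCast_surj d2)
                  ((zmodCast_surj d3).comp Prod.fst_surjective)
                set f : G →+ ZMod 2 × (ZMod 2 × ZMod 4) := f3.comp e2.toAddMonoidHom with hfdef
                have hf : Surjective f := hf3.comp e2.surjective
                have hcT : Nat.card (ZMod 2 × (ZMod 2 × ZMod 4)) = 16 := by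
                  simp [Nat.card_prod, Nat.card_zmod]
                have h2e : (4:ℕ) ≤ 2 ^ e1 := by
                  calc (4:ℕ) = 2 ^ 2 := by norm_num
                    _ ≤ 2 ^ e1 := Nat.pow_le_pow_right (by norm_num) he2
                refine finish f hf 4 (by omega)
                  (prod_nsmul_zero (zmod_nsmul_zero (by norm_num))
                    (prod_nsmul_zero (zmod_nsmul_zero (by norm_num)) (zmod_nsmul_zero dvd_rfl)))
                  (by omega) (by omega) (by omega) (by omega) (by omega) ?_
                intro heq
                rcases Nat.lt_or_ge b 2 with hb | hb
                · -- b = 1 : card G = 4 * 2^e1 * cR' = 16 gives e1 = 2, R' trivial: h8 case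
                  exact h8 ⟨eqIso f hf heq⟩
                · exact h8 ⟨eqIso f hf heq⟩
              · -- e1 = 1
                have he11 : e1 = 1 := by omega
                subst he11
                by_cases hb1 : b = 1
                · subst hb1
                  -- all three 2-factors are Z/2
                  by_cases hR' : Nat.card R' = 1
                  · -- G ≃ (Z/2)³ : excluded by h7
                    obtain ⟨hs, -⟩ := Nat.card_eq_one_iff_unique.mp hR'
                    haveI : Inhabited R' := ⟨0⟩
                    haveI : Unique R' := Unique.mk' R'
                    have c2 : ZMod (2 ^ 1) ≃+ ZMod 2 := zmodCongr (by norm_num)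
                    have eG : G ≃+ ZMod 2 × (ZMod 2 × ZMod 2) :=
                      (e2.trans (AddEquiv.prodCongr (AddEquiv.prodCongr c2 c2)
                        (AddEquiv.prodUnique.trans c2))).trans AddEquiv.prodAssoc
                    exact absurd ⟨eG⟩ h7
                  · -- split a fourth factor
                    obtain ⟨m, hmdef⟩ : ∃ m, m = (Nat.card R').minFac := ⟨_, rfl⟩
                    have hm : m.Prime := hmdef ▸ Nat.minFac_prime (by omega)
                    haveI : NeZero m := ⟨hm.pos.ne'⟩
                    obtain ⟨e2', he2', R'', _, _, ⟨u'⟩⟩ := split R' m hm (hmdef ▸ Nat.minFac_dvd _)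
                    have e3 : G ≃+ (ZMod (2 ^ 1) × ZMod (2 ^ 1)) ×
                        (ZMod (2 ^ 1) × (ZMod (m ^ e2') × R'')) :=
                      e2.trans (AddEquiv.prodCongr (AddEquiv.refl _)
                        (AddEquiv.prodCongr (AddEquiv.refl _) u'))
                    have hcR'' : 0 < Nat.card R'' := Nat.card_pos
                    have hcG3 : Nat.card G =
                        2 ^ 1 * 2 ^ 1 * (2 ^ 1 * (m ^ e2' * Nat.card R'')) := by
                      rw [Nat.card_congr e3.toEquiv]
                      simp only [Nat.card_prod, Nat.card_zmod]
                    by_cases hm2 : m = 2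
                    · subst hm2
                      by_cases hee : 2 ≤ e2'
                      · -- target Z/2 × (Z/2 × Z/4), never equality
                        have d3 : (4:ℕ) ∣ 2 ^ e2' := by
                          rw [show (4:ℕ) = 2 ^ 2 by norm_num]; exact pow_dvd_pow 2 hee
                        obtain ⟨f3, hf3⟩ := surj3 (zmodCast d1) (zmodCast d1)
                          ((zmodCast d3).comp ((AddMonoidHom.fst _ R'').comp
                            (AddMonoidHom.snd (ZMod (2 ^ 1)) _)))
                          (zmodCast_surj d1) (zmodCast_surj d1)
                          ((zmodCast_surj d3).comp
                            (Prod.fst_surjective.comp Prod.snd_surjective))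
                        set f : G →+ ZMod 2 × (ZMod 2 × ZMod 4) := f3.comp e3.toAddMonoidHom
                          with hfdef
                        have hf : Surjective f := hf3.comp e3.surjective
                        have hcT : Nat.card (ZMod 2 × (ZMod 2 × ZMod 4)) = 16 := by
                          simp [Nat.card_prod, Nat.card_zmod]
                        have h2e : (4:ℕ) ≤ 2 ^ e2' := by
                          calc (4:ℕ) = 2 ^ 2 := by norm_num
                            _ ≤ 2 ^ e2' := Nat.pow_le_pow_right (by norm_num) hee
                        refine finish f hf 4 (by omega)
                          (prod_nsmul_zero (zmod_nsmul_zero (by norm_num))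
                            (prod_nsmul_zero (zmod_nsmul_zero (by norm_num))
                              (zmod_nsmul_zero dvd_rfl)))
                          (by omega) (by omega) (by omega) (by omega) (by omega) ?_
                        intro heq
                        -- card G = 8 * 2^e2' * cR'' ≥ 32 > 16, contradiction
                        have : (4:ℕ) ≤ 4 * Nat.card R'' := by omega
                        nlinarith
                      · -- e2' = 1 : target (Z/2)⁴
                        have he21 : e2' = 1 := by omega
                        subst he21
                        obtain ⟨f3, hf3⟩ := surj3 (zmodCast d1) (zmodCast d1)
                          ((zmodCast d1).prodMap ((zmodCast d1).comp (AddMonoidHom.fst _ R'')))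
                          (zmodCast_surj d1) (zmodCast_surj d1)
                          ((zmodCast_surj d1).prodMap
                            ((zmodCast_surj d1).comp Prod.fst_surjective))
                        set f : G →+ ZMod 2 × (ZMod 2 × (ZMod 2 × ZMod 2)) :=
                          f3.comp e3.toAddMonoidHom with hfdef
                        have hf : Surjective f := hf3.comp e3.surjective
                        have hcT : Nat.card (ZMod 2 × (ZMod 2 × (ZMod 2 × ZMod 2))) = 16 := by
                          simp [Nat.card_prod, Nat.card_zmod]
                        refine finish f hf 2 (by omega)
                          (prod_nsmul_zero (zmod_nsmul_zero dvd_rfl)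
                            (prod_nsmul_zero (zmod_nsmul_zero dvd_rfl)
                              (prod_nsmul_zero (zmod_nsmul_zero dvd_rfl)
                                (zmod_nsmul_zero dvd_rfl))))
                          (by omega) (by omega) (by omega) (by omega) (by omega) ?_
                        intro heq
                        exact h10 ⟨eqIso f hf heq⟩
                    · -- m odd : target Z/2 × (Z/2 × Z/m), never equality
                      have hm3 : 3 ≤ m := by
                        have := hm.two_le
                        omega
                      have dm : m ∣ m ^ e2' := dvd_pow_self m (by omega)
                      obtain ⟨f3, hf3⟩ := surj3 (zmodCast d1) (zmodCast d1)
                        ((zmodCast dm).comp ((AddMonoidHom.fst _ R'').comp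
                          (AddMonoidHom.snd (ZMod (2 ^ 1)) _)))
                        (zmodCast_surj d1) (zmodCast_surj d1)
                        ((zmodCast_surj dm).comp
                          (Prod.fst_surjective.comp Prod.snd_surjective))
                      set f : G →+ ZMod 2 × (ZMod 2 × ZMod m) := f3.comp e3.toAddMonoidHom
                        with hfdef
                      have hf : Surjective f := hf3.comp e3.surjective
                      have hcT : Nat.card (ZMod 2 × (ZMod 2 × ZMod m)) = 4 * m := by
                        simp only [Nat.card_prod, Nat.card_zmod]
                        ring
                      have hme : m ≤ m ^ e2' := Nat.le_self_pow (by omega) m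
                      have hmle : m ^ e2' ≤ m ^ e2' * Nat.card R'' :=
                        Nat.le_mul_of_pos_right _ hcR''
                      refine finish f hf (2 * m) (by omega)
                        (prod_nsmul_zero (zmod_nsmul_zero ⟨m, rfl⟩)
                          (prod_nsmul_zero (zmod_nsmul_zero ⟨m, rfl⟩)
                            (zmod_nsmul_zero (dvd_mul_left m 2))))
                        (by omega) (by omega) (by omega) (by omega) (by omega) ?_
                      intro heq
                      -- card T = 4m but card G = 8 * (m^e2' * cR'') ≥ 8m
                      omega
                · -- b = 2, l = 2, e1 = 1 : target Z/2 × (Z/4 × Z/2)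
                  have hb2 : b = 2 := by omega
                  subst hb2
                  have d4 : (4:ℕ) ∣ 2 ^ 2 := by norm_num
                  obtain ⟨f3, hf3⟩ := surj3 (zmodCast d1) (zmodCast d4)
                    ((zmodCast d1).comp (AddMonoidHom.fst _ R'))
                    (zmodCast_surj d1) (zmodCast_surj d4)
                    ((zmodCast_surj d1).comp Prod.fst_surjective)
                  set f : G →+ ZMod 2 × (ZMod 4 × ZMod 2) := f3.comp e2.toAddMonoidHom
                    with hfdef
                  have hf : Surjective f := hf3.comp e2.surjective
                  have hcT : Nat.card (ZMod 2 × (ZMod 4 × ZMod 2)) = 16 := by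
                    simp [Nat.card_prod, Nat.card_zmod]
                  refine finish f hf 4 (by omega)
                    (prod_nsmul_zero (zmod_nsmul_zero (by norm_num))
                      (prod_nsmul_zero (zmod_nsmul_zero dvd_rfl)
                        (zmod_nsmul_zero (by norm_num))))
                    (by omega) (by omega) (by omega) (by omega) (by omega) ?_
                  intro heq
                  exact h8 ⟨(eqIso f hf heq).trans
                    (AddEquiv.prodCongr (AddEquiv.refl _) AddEquiv.prodComm)⟩
            · -- l odd : target Z/2 × (Z/2 × Z/l)
              have hl3 : 3 ≤ l := by
                have := hl.two_le
                omega
              have d2 : (2:ℕ) ∣ 2 ^ b := dvd_pow_self 2 (by omega)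
              have dl : l ∣ l ^ e1 := dvd_pow_self l (by omega)
              obtain ⟨f3, hf3⟩ := surj3 (zmodCast d1) (zmodCast d2)
                ((zmodCast dl).comp (AddMonoidHom.fst _ R'))
                (zmodCast_surj d1) (zmodCast_surj d2)
                ((zmodCast_surj dl).comp Prod.fst_surjective)
              set f : G →+ ZMod 2 × (ZMod 2 × ZMod l) := f3.comp e2.toAddMonoidHom with hfdef
              have hf : Surjective f := hf3.comp e2.surjective
              have hcT : Nat.card (ZMod 2 × (ZMod 2 × ZMod l)) = 4 * l := by
                simp only [Nat.card_prod, Nat.card_zmod]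
                ring
              have hle : l ≤ l ^ e1 := Nat.le_self_pow (by omega) l
              have hlle : l ^ e1 ≤ l ^ e1 * Nat.card R' := Nat.le_mul_of_pos_right _ hcR'
              have h2b : 2 ≤ 2 ^ b := Nat.le_self_pow (by omega) 2
              refine finish f hf (2 * l) (by omega)
                (prod_nsmul_zero (zmod_nsmul_zero ⟨l, rfl⟩)
                  (prod_nsmul_zero (zmod_nsmul_zero ⟨l, rfl⟩)
                    (zmod_nsmul_zero (dvd_mul_left l 2))))
                (by omega) (by omega) (by omega) (by omega) (by omega) ?_
              intro heq
              -- equality forces b = 1, e1 = 1, R' trivial : G ≃ Z/2 × Z/2l, excluded by h3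
              by_cases hb1 : b = 1
              · have hco : Nat.Coprime 2 l := (Nat.coprime_primes (by norm_num) hl).mpr
                  (by omega)
                exact h3 ⟨l, hl, ⟨(eqIso f hf heq).trans
                  (AddEquiv.prodCongr (AddEquiv.refl _) (crt hco).symm)⟩⟩
              · -- b = 2 : card G = 8 * l^e1 * cR' ≥ 8l > 4l
                have hb2 : b = 2 := by omega
                subst hb2
                omega
    · -- p = 3
      by_cases hb2 : 2 ≤ b
      · -- target Z/3 × Z/9
        have d1 : (3:ℕ) ∣ 3 ^ a := dvd_pow_self 3 (by omega)
        have d2 : (9:ℕ) ∣ 3 ^ b := by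
          rw [show (9:ℕ) = 3 ^ 2 by norm_num]; exact pow_dvd_pow 3 hb2
        set f : G →+ ZMod 3 × ZMod 9 :=
          (((zmodCast d1).prodMap (zmodCast d2)).comp (AddMonoidHom.fst _ _)).comp
            e.toAddMonoidHom with hfdef
        have hf : Surjective f :=
          (((zmodCast_surj d1).prodMap (zmodCast_surj d2)).comp
            Prod.fst_surjective).comp e.surjective
        have hcT : Nat.card (ZMod 3 × ZMod 9) = 27 := by
          simp only [Nat.card_prod, Nat.card_zmod]
        refine finish f hf 9 (by omega)
          (prod_nsmul_zero (zmod_nsmul_zero (by norm_num)) (zmod_nsmul_zero dvd_rfl))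
          (by omega) (by omega) (by omega) (by omega) (by omega) ?_
        intro heq
        exact h4 ⟨3, by norm_num, ⟨(eqIso f hf heq).trans
          (AddEquiv.prodCongr (AddEquiv.refl _) (zmodCongr (by norm_num)))⟩⟩
      · -- a = b = 1
        have ha1 : a = 1 := by omega
        have hb1 : b = 1 := by omega
        subst ha1; subst hb1
        have d1 : (3:ℕ) ∣ 3 ^ 1 := by norm_num
        by_cases hR : Nat.card R = 1
        · obtain ⟨hs, -⟩ := Nat.card_eq_one_iff_unique.mp hR
          haveI : Inhabited R := ⟨0⟩
          haveI : Unique R := Unique.mk' R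
          have eG : G ≃+ ZMod 3 × ZMod 3 := (e.trans AddEquiv.prodUnique).trans
            (AddEquiv.prodCongr (zmodCongr (by norm_num)) (zmodCongr (by norm_num)))
          exact absurd ⟨3, by norm_num, ⟨eG⟩⟩ h2
        · obtain ⟨l, hldef⟩ : ∃ l, l = (Nat.card R).minFac := ⟨_, rfl⟩
          have hl : l.Prime := hldef ▸ Nat.minFac_prime (by omega)
          haveI : NeZero l := ⟨hl.pos.ne'⟩
          obtain ⟨e1, he1, R', _, _, ⟨u⟩⟩ := split R l hl (hldef ▸ Nat.minFac_dvd _)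
          have e2 : G ≃+ (ZMod (3 ^ 1) × ZMod (3 ^ 1)) × (ZMod (l ^ e1) × R') :=
            e.trans (AddEquiv.prodCongr (AddEquiv.refl _) u)
          have hcR' : 0 < Nat.card R' := Nat.card_pos
          have hcG2 : Nat.card G = 3 ^ 1 * 3 ^ 1 * (l ^ e1 * Nat.card R') := by
            rw [Nat.card_congr e2.toEquiv]
            simp only [Nat.card_prod, Nat.card_zmod]
          by_cases hl3 : l = 3
          · subst hl3
            by_cases he2 : 2 ≤ e1
            · -- target Z/3 × Z/9 from first and third factors; never equality
              have d9 : (9:ℕ) ∣ 3 ^ e1 := by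
                rw [show (9:ℕ) = 3 ^ 2 by norm_num]; exact pow_dvd_pow 3 he2
              set f : G →+ ZMod 3 × ZMod 9 :=
                (((zmodCast d1).comp (AddMonoidHom.fst _ _)).prodMap
                  ((zmodCast d9).comp (AddMonoidHom.fst _ R'))).comp e2.toAddMonoidHom
                with hfdef
              have hf : Surjective f :=
                (((zmodCast_surj d1).comp Prod.fst_surjective).prodMap
                  ((zmodCast_surj d9).comp Prod.fst_surjective)).comp e2.surjective
              have hcT : Nat.card (ZMod 3 × ZMod 9) = 27 := by
                simp only [Nat.card_prod, Nat.card_zmod]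
              have h9e : (9:ℕ) ≤ 3 ^ e1 := by
                calc (9:ℕ) = 3 ^ 2 := by norm_num
                  _ ≤ 3 ^ e1 := Nat.pow_le_pow_right (by norm_num) he2
              refine finish f hf 9 (by omega)
                (prod_nsmul_zero (zmod_nsmul_zero (by norm_num)) (zmod_nsmul_zero dvd_rfl))
                (by omega) (by omega) (by omega) (by omega) (by omega) ?_
              intro heq
              -- card G = 9 * (3^e1 * cR') ≥ 81 > 27
              have hY : 9 ≤ 3 ^ e1 * Nat.card R' :=
                le_trans h9e (Nat.le_mul_of_pos_right _ hcR')
              norm_num at hcG2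
              omega
            · -- e1 = 1 : target (Z/3)³
              have he11 : e1 = 1 := by omega
              subst he11
              obtain ⟨f3, hf3⟩ := surj3 (zmodCast d1) (zmodCast d1)
                ((zmodCast d1).comp (AddMonoidHom.fst _ R'))
                (zmodCast_surj d1) (zmodCast_surj d1)
                ((zmodCast_surj d1).comp Prod.fst_surjective)
              set f : G →+ ZMod 3 × (ZMod 3 × ZMod 3) := f3.comp e2.toAddMonoidHom with hfdef
              have hf : Surjective f := hf3.comp e2.surjective
              have hcT : Nat.card (ZMod 3 × (ZMod 3 × ZMod 3)) = 27 := by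
                simp [Nat.card_prod, Nat.card_zmod]
              refine finish f hf 3 (by omega)
                (prod_nsmul_zero (zmod_nsmul_zero dvd_rfl)
                  (prod_nsmul_zero (zmod_nsmul_zero dvd_rfl) (zmod_nsmul_zero dvd_rfl)))
                (by omega) (by omega) (by omega) (by omega) (by omega) ?_
              intro heq
              exact h9 ⟨eqIso f hf heq⟩
          · -- l ≠ 3 : target Z/3 × (Z/3 × Z/l)
            have hl2 : 2 ≤ l := hl.two_le
            have dl : l ∣ l ^ e1 := dvd_pow_self l (by omega)
            obtain ⟨f3, hf3⟩ := surj3 (zmodCast d1) (zmodCast d1)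
              ((zmodCast dl).comp (AddMonoidHom.fst _ R'))
              (zmodCast_surj d1) (zmodCast_surj d1)
              ((zmodCast_surj dl).comp Prod.fst_surjective)
            set f : G →+ ZMod 3 × (ZMod 3 × ZMod l) := f3.comp e2.toAddMonoidHom with hfdef
            have hf : Surjective f := hf3.comp e2.surjective
            have hcT : Nat.card (ZMod 3 × (ZMod 3 × ZMod l)) = 9 * l := by
              simp only [Nat.card_prod, Nat.card_zmod]
              ring
            refine finish f hf (3 * l) (by omega)
              (prod_nsmul_zero (zmod_nsmul_zero ⟨l, rfl⟩)
                (prod_nsmul_zero (zmod_nsmul_zero ⟨l, rfl⟩)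
                  (zmod_nsmul_zero (dvd_mul_left l 3))))
              (by omega) (by omega) (by omega) (by omega) (by omega) ?_
            intro heq
            have hco : Nat.Coprime 3 l := (Nat.coprime_primes (by norm_num) hl).mpr
              (fun h => hl3 h.symm)
            exact h4 ⟨l, hl, ⟨(eqIso f hf heq).trans
              (AddEquiv.prodCongr (AddEquiv.refl _) (crt hco).symm)⟩⟩
end

section
/- Let f: ℤ/3ℤ → Aut((ℤ/pℤ)^j) (p prime, p ≠ 3, j ≥ 1) be a homomorphism with f(1̄) a non-trivial automorphism of order 3. Then there exists a non-zero y ∈ (ℤ/pℤ)^j with y + f(1̄)(y) + f(2̄)(y) = 0, and the subgroup of (ℤ/pℤ)^j ⋊_f ℤ/3ℤ generated by (y, 0̄) and (f(1̄)(y), 0̄) is a non-trivial normal subgroup of order at most p². -/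
private lemma stmt19_aux {G : Type*} [CommGroup G] (a b c : G) :
    a * c⁻¹ * (b * a⁻¹) * (c * b⁻¹) = 1 := by
  simp [mul_assoc, mul_comm, mul_left_comm]

/-- Let `p ≠ 3` be a prime, `j ≥ 1`, and let
`φ : ℤ/3ℤ → Aut((ℤ/pℤ)^j)` (written multiplicatively) be such that `φ(1̄)` has order 3.
Then there is a non-zero `y` with `y + φ(1̄)y + φ(2̄)y = 0`, and the subgroup of the
semidirect product `(ℤ/pℤ)^j ⋊_φ ℤ/3ℤ` generated by `(y,0̄)` and `(φ(1̄)y,0̄)` is a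
non-trivial normal subgroup of order at most `p²`. -/
theorem stmt19 (p j : ℕ) (hp : p.Prime) (hp3 : p ≠ 3) (hj : 1 ≤ j)
    (φ : Multiplicative (ZMod 3) →* MulAut (Multiplicative (Fin j → ZMod p)))
    (hord : orderOf (φ (Multiplicative.ofAdd (1 : ZMod 3))) = 3) :
    ∃ y : Multiplicative (Fin j → ZMod p), y ≠ 1 ∧
      y * φ (Multiplicative.ofAdd (1 : ZMod 3)) y
        * φ (Multiplicative.ofAdd (2 : ZMod 3)) y = 1 ∧
      (Subgroup.closure {SemidirectProduct.inl y,
          SemidirectProduct.inl (φ (Multiplicative.ofAdd (1 : ZMod 3)) y)} :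
        Subgroup ((Multiplicative (Fin j → ZMod p)) ⋊[φ] Multiplicative (ZMod 3))).Normal ∧
      (Subgroup.closure {SemidirectProduct.inl y,
          SemidirectProduct.inl (φ (Multiplicative.ofAdd (1 : ZMod 3)) y)} :
        Subgroup ((Multiplicative (Fin j → ZMod p)) ⋊[φ] Multiplicative (ZMod 3))) ≠ ⊥ ∧
      Nat.card (Subgroup.closure {SemidirectProduct.inl y,
          SemidirectProduct.inl (φ (Multiplicative.ofAdd (1 : ZMod 3)) y)} :
        Subgroup ((Multiplicative (Fin j → ZMod p)) ⋊[φ] Multiplicative (ZMod 3)))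
        ≤ p ^ 2 := by
  haveI := Fact.mk hp
  set A := Multiplicative (Fin j → ZMod p) with hA
  set σ : MulAut A := φ (Multiplicative.ofAdd (1 : ZMod 3)) with hσdef
  -- σ³ = 1
  have hσ3 : σ ^ 3 = 1 := by rw [← hord]; exact pow_orderOf_eq_one σ
  have hσ3' : ∀ x : A, σ (σ (σ x)) = x := by
    intro x
    simpa [pow_succ, MulAut.mul_apply] using
      (congrArg (fun (e : MulAut A) => e x) hσ3 : (σ ^ 3) x = (1 : MulAut A) x)
  have h2 : φ (Multiplicative.ofAdd (2 : ZMod 3)) = σ * σ := by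
    have h21 : (Multiplicative.ofAdd (2 : ZMod 3)) =
        Multiplicative.ofAdd (1 : ZMod 3) * Multiplicative.ofAdd (1 : ZMod 3) := by decide
    rw [h21, map_mul, hσdef]
  -- find z with σ z ≠ z
  have hσne : σ ≠ 1 := by
    intro h; rw [h, orderOf_one] at hord; omega
  have hez : ∃ z : A, σ z ≠ z := by
    by_contra h
    push_neg at h
    exact hσne (by ext x; simp [h x])
  obtain ⟨z, hz⟩ := hez
  set y : A := σ z * z⁻¹ with hy
  have hy1 : y ≠ 1 := by
    simp only [hy, ne_eq, mul_inv_eq_one]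
    exact hz
  -- the relation
  have hrel : y * σ y * σ (σ y) = 1 := by
    rw [hy, map_mul, map_inv, map_mul, map_inv, hσ3']
    exact stmt19_aux (σ z) (σ (σ z)) z
  refine ⟨y, hy1, ?_, ?_⟩
  · rw [h2]; simpa using hrel
  -- subgroup K in A
  set K : Subgroup A := Subgroup.closure {y, σ y} with hK
  have hyK : y ∈ K := Subgroup.subset_closure (by simp)
  have hsyK : σ y ∈ K := Subgroup.subset_closure (by simp)
  have hs2yK : σ (σ y) ∈ K := by
    have he : σ (σ y) = (y * σ y)⁻¹ := by
      rw [eq_inv_iff_mul_eq_one, mul_comm]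
      exact hrel
    rw [he]
    exact inv_mem (mul_mem hyK hsyK)
  have hσK : ∀ x ∈ K, σ x ∈ K := by
    intro x hx
    refine Subgroup.closure_induction ?_ ?_ ?_ ?_ hx
    · rintro w (rfl | rfl)
      · exact hsyK
      · exact hs2yK
    · simpa using one_mem K
    · intro a b _ _ ha hb; rw [map_mul]; exact mul_mem ha hb
    · intro a _ ha; rw [map_inv]; exact inv_mem ha
  have hmapK : ∀ g : Multiplicative (ZMod 3), ∀ x ∈ K, φ g x ∈ K := by
    have hcases : ∀ g : Multiplicative (ZMod 3),
        g = Multiplicative.ofAdd 0 ∨ g = Multiplicative.ofAdd 1 ∨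
        g = Multiplicative.ofAdd 2 := by decide
    intro g x hx
    rcases hcases g with rfl | rfl | rfl
    · simpa using hx
    · rw [← hσdef]; exact hσK x hx
    · rw [h2]; exact hσK _ (hσK x hx)
  -- H = K.map inl
  have hH : (Subgroup.closure {SemidirectProduct.inl y,
        SemidirectProduct.inl (φ (Multiplicative.ofAdd (1 : ZMod 3)) y)} :
      Subgroup (A ⋊[φ] Multiplicative (ZMod 3)))
      = K.map (SemidirectProduct.inl (φ := φ)) := by
    rw [hK, MonoidHom.map_closure, Set.image_pair, hσdef]
  rw [hH]
  have hconj : ∀ (g : A ⋊[φ] Multiplicative (ZMod 3)) (x : A),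
      g * SemidirectProduct.inl x * g⁻¹ = SemidirectProduct.inl (φ g.right x) := by
    intro g x
    ext
    · simp [mul_comm, mul_left_comm, mul_assoc]
    · simp
  refine ⟨?_, ?_, ?_⟩
  · refine ⟨?_⟩
    rintro n ⟨x, hxK, rfl⟩ g
    rw [hconj]
    exact ⟨φ g.right x, hmapK _ x hxK, rfl⟩
  · intro hbot
    have : SemidirectProduct.inl y ∈ K.map (SemidirectProduct.inl (φ := φ)) :=
      ⟨y, hyK, rfl⟩
    rw [hbot, Subgroup.mem_bot] at this
    exact hy1 (by simpa using SemidirectProduct.inl_injective this)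
  · -- cardinality
    have hcardeq : Nat.card (K.map (SemidirectProduct.inl (φ := φ))) = Nat.card K :=
      (Nat.card_congr (K.equivMapOfInjective _ SemidirectProduct.inl_injective).toEquiv).symm
    rw [hcardeq]
    -- every element of A has a^p = 1
    have hpow : ∀ a : A, a ^ p = 1 := by
      intro a
      have : Multiplicative.toAdd (a ^ p) = 0 := by
        show p • Multiplicative.toAdd a = 0
        funext i
        simp [nsmul_eq_mul, ZMod.natCast_self]
      have h0 := congrArg Multiplicative.ofAdd this
      simpa using h0
    have hred : ∀ (x : A) (m : ℤ), x ^ m = x ^ (((m : ZMod p)).val) := by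
      intro x m
      have hdvd : (p : ℤ) ∣ m - (((m : ZMod p)).val : ℤ) := by
        rw [← ZMod.intCast_zmod_eq_zero_iff_dvd]
        push_cast
        rw [ZMod.natCast_val, ZMod.cast_id, sub_self]
      obtain ⟨k, hk⟩ := hdvd
      have hm : m = (((m : ZMod p)).val : ℤ) + p * k := by linarith
      conv_lhs => rw [hm]
      rw [zpow_add, zpow_natCast]
      rw [zpow_mul, zpow_natCast, hpow, one_zpow, mul_one]
    -- every element of K is y^m (σ y)^n
    have hform : ∀ k ∈ K, ∃ m n : ℤ, k = y ^ m * (σ y) ^ n := by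
      intro k hk
      refine Subgroup.closure_induction ?_ ?_ ?_ ?_ hk
      · rintro w (rfl | rfl)
        · exact ⟨1, 0, by simp⟩
        · exact ⟨0, 1, by simp⟩
      · exact ⟨0, 0, by simp⟩
      · rintro a b _ _ ⟨m, n, rfl⟩ ⟨m', n', rfl⟩
        exact ⟨m + m', n + n', by rw [zpow_add, zpow_add, mul_mul_mul_comm]⟩
      · rintro a _ ⟨m, n, rfl⟩
        exact ⟨-m, -n, by rw [zpow_neg, zpow_neg, mul_inv_rev, mul_comm]⟩
    -- surjection from ZMod p × ZMod p onto K
    have hsurj : Function.Surjective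
        (fun ab : ZMod p × ZMod p =>
          (⟨y ^ ab.1.val * (σ y) ^ ab.2.val,
            mul_mem (pow_mem hyK _) (pow_mem hsyK _)⟩ : K)) := by
      rintro ⟨k, hk⟩
      obtain ⟨m, n, rfl⟩ := hform k hk
      refine ⟨((m : ZMod p), (n : ZMod p)), ?_⟩
      ext
      simp only
      rw [← hred, ← hred]
    calc Nat.card K ≤ Nat.card (ZMod p × ZMod p) :=
          Nat.card_le_card_of_surjective _ hsurj
      _ = p ^ 2 := by simp [Nat.card_eq_fintype_card, ZMod.card, sq]
end
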